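/- Let V be a real vector space of dimension 2n+1, α a linear functional and ω an alternating bilinear form on V with α ∧ ω^n ≠ 0, and let R be the unique vector with α(R)=1 and ι_R ω = 0. Then for every real number h and every linear functional β on V there exists a unique vector v ∈ V satisfying α(v) = h and ω(v, ·) = β(R)·α − β. -/

import Mathlib

/-!
The map `T v = α(v)·α + ι_v ω` from `V` to its dual is injective: evaluating `T v = 0` at the Reeb
vector gives `α v = 0` (as `ω v R = -ω R v = 0`), and then `ι_v ω = 0`, so nondegeneracy of `ω`
on `ker α` forces `v = 0`. By dimension count it is a linear isomorphism, and the two contact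
conditions on `v` say exactly that `T v = h·α + β(R)·α − β`.
-/

namespace ContactForm

variable {K V : Type*} [Field K] [AddCommGroup V] [Module K V]

/-- The musical isomorphism `♭` of the contact structure. -/
def flat (α : V →ₗ[K] K) (ω : V →ₗ[K] V →ₗ[K] K) : V →ₗ[K] Module.Dual K V :=
  α.smulRight α + ω

variable {α : V →ₗ[K] K} {ω : V →ₗ[K] V →ₗ[K] K} {R : V}

theorem flat_apply_apply (v w : V) : flat α ω v w = α v * α w + ω v w := rfl

theorem flat_apply_eq_iff (hω : ω.IsAlt) (hR1 : α R = 1) (hR2 : ∀ v : V, ω R v = 0)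
    {v : V} {f : Module.Dual K V} :
    flat α ω v = f ↔ α v = f R ∧ ∀ w : V, ω v w = f w - f R * α w := by
  constructor
  · rintro rfl
    have hvR : ω v R = 0 := hω.eq_iff.mp (hR2 v)
    have hαv : α v = flat α ω v R := by rw [flat_apply_apply, hR1, hvR]; ring
    refine ⟨hαv, fun w => ?_⟩
    rw [← hαv, flat_apply_apply]
    ring
  · rintro ⟨hαv, hωv⟩
    ext w
    rw [flat_apply_apply, hωv, hαv]
    ring

theorem flat_injective (hω : ω.IsAlt) (hR1 : α R = 1) (hR2 : ∀ v : V, ω R v = 0)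
    (hnondeg : ∀ v : V, α v = 0 → (∀ w : V, α w = 0 → ω v w = 0) → v = 0) :
    Function.Injective (flat α ω) := by
  rw [← LinearMap.ker_eq_bot, Submodule.eq_bot_iff]
  intro v hv
  obtain ⟨hαv, hωv⟩ := (flat_apply_eq_iff hω hR1 hR2).mp (LinearMap.mem_ker.mp hv)
  simp only [LinearMap.zero_apply, zero_mul, sub_zero] at hαv hωv
  exact hnondeg v hαv fun w _ => hωv w

theorem flat_bijective [FiniteDimensional K V] (hω : ω.IsAlt) (hR1 : α R = 1)
    (hR2 : ∀ v : V, ω R v = 0)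
    (hnondeg : ∀ v : V, α v = 0 → (∀ w : V, α w = 0 → ω v w = 0) → v = 0) :
    Function.Bijective (flat α ω) :=
  have hinj := flat_injective hω hR1 hR2 hnondeg
  ⟨hinj, (LinearMap.injective_iff_surjective_of_finrank_eq_finrank
    (Subspace.dual_finrank_eq).symm).mp hinj⟩

end ContactForm

open ContactForm in
theorem contact_hamiltonian_vector_exists_unique_general (V : Type*) [AddCommGroup V]
    [Module ℝ V] [FiniteDimensional ℝ V]
    (α : V →ₗ[ℝ] ℝ) (ω : V →ₗ[ℝ] V →ₗ[ℝ] ℝ)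
    (halt : ∀ v : V, ω v v = 0)
    (hnondeg : ∀ v : V, α v = 0 → (∀ w : V, α w = 0 → ω v w = 0) → v = 0)
    (R : V) (hR1 : α R = 1) (hR2 : ∀ v : V, ω R v = 0)
    (h : ℝ) (β : V →ₗ[ℝ] ℝ) :
    ∃! v : V, α v = h ∧ ∀ w : V, ω v w = β R * α w - β w := by
  refine (existsUnique_congr fun v => ?_).mp
    ((flat_bijective halt hR1 hR2 hnondeg).existsUnique (h • α + (β R • α - β)))
  rw [flat_apply_eq_iff halt hR1 hR2]
  simp only [LinearMap.add_apply, LinearMap.sub_apply, LinearMap.smul_apply, smul_eq_mul, hR1,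
    mul_one, sub_self, add_zero, add_sub_cancel_left]

/-- Let `V` be a real vector space of dimension `2n+1`, `α` a linear
functional and `ω` an alternating bilinear form on `V` with `α ∧ ωⁿ ≠ 0` (i.e. `α ≠ 0`
and `ω` is nondegenerate on `ker α`), and let `R` be the unique vector with `α R = 1` and
`ι_R ω = 0`.  Then for every `h : ℝ` and every linear functional `β` on `V` there is a
unique vector `v` with `α v = h` and `ω v · = β(R)·α − β`. -/
theorem contact_hamiltonian_vector_exists_unique (n : ℕ) (V : Type*) [AddCommGroup V]
    [Module ℝ V] [FiniteDimensional ℝ V] (hdim : Module.finrank ℝ V = 2 * n + 1)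
    (α : V →ₗ[ℝ] ℝ) (ω : V →ₗ[ℝ] V →ₗ[ℝ] ℝ)
    (halt : ∀ v : V, ω v v = 0)
    (hα : α ≠ 0)
    (hnondeg : ∀ v : V, α v = 0 → (∀ w : V, α w = 0 → ω v w = 0) → v = 0)
    (R : V) (hR1 : α R = 1) (hR2 : ∀ v : V, ω R v = 0)
    (h : ℝ) (β : V →ₗ[ℝ] ℝ) :
    ∃! v : V, α v = h ∧ ∀ w : V, ω v w = β R * α w - β w :=
  contact_hamiltonian_vector_exists_unique_general V α ω halt hnondeg R hR1 hR2 h β
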